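/- Let d ≥ 1, let R be a Borel probability measure on (ℝ^d × ℝ^d) × (ℝ^d × ℝ^d), and let R^X denote the pushforward of R under the map ((x₁,v₁),(x₂,v₂)) ↦ (x₁,x₂). Let μ, ν be Borel probability measures on ℝ^d. (i) For every q ∈ Π_X(μ,ν), writing q^X for the pushforward of q under ((x₁,v₁),(x₂,v₂)) ↦ (x₁,x₂), one has H(q|R) ≥ H(q^X|R^X). (ii) If π ∈ Π(μ,ν) is a coupling of μ and ν on ℝ^d × ℝ^d with π ≪ R^X, then the measure μ^T defined by dμ^T/dR((x₁,v₁),(x₂,v₂)) = (dπ/dR^X)(x₁,x₂) is a probability measure belonging to Π_X(μ,ν), its pushforward under ((x₁,v₁),(x₂,v₂)) ↦ (x₁,x₂) equals π, and H(μ^T|R) = H(π|R^X). Consequently, inf { H(q|R) : q ∈ Π_X(μ,ν) } = inf { H(π|R^X) : π ∈ Π(μ,ν) }. -/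

import Mathlib

open MeasureTheory Filter Topology

/- Relative entropy `H(P|Q)`: `∫ log (dP/dQ) dP` if `P ≪ Q` (and the integral makes
sense), and `+∞` otherwise. -/
open Classical in
noncomputable def relEntropy {α : Type*} [MeasurableSpace α] (P Q : Measure α) : EReal :=
  if P ≪ Q ∧ Integrable (llr P Q) P then ((∫ x, llr P Q x ∂P : ℝ) : EReal) else ⊤

/-- The set of couplings `Π(μ,ν)`: probability measures on `α × α` with first marginal `μ`
and second marginal `ν`. -/
def couplings {α : Type*} [MeasurableSpace α] (μ ν : Measure α) : Set (Measure (α × α)) :=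
  {p | IsProbabilityMeasure p ∧ p.map Prod.fst = μ ∧ p.map Prod.snd = ν}

/-- The set `Π_X(μ,ν)`: probability measures on `(α × α) × (α × α)`
(points `((x₁,v₁),(x₂,v₂))`) whose pushforwards under `((x₁,v₁),(x₂,v₂)) ↦ x₁` and
`((x₁,v₁),(x₂,v₂)) ↦ x₂` are `μ` and `ν` respectively. -/
def PiX {α : Type*} [MeasurableSpace α] (μ ν : Measure α) :
    Set (Measure ((α × α) × (α × α))) :=
  {p | IsProbabilityMeasure p ∧ p.map (fun z => z.1.1) = μ ∧ p.map (fun z => z.2.1) = ν}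

/-!
Part (i) is the data-processing inequality under the projection `T z = (z.1.1, z.2.1)`:
between measures of equal mass, relative entropy is the Kullback-Leibler divergence `klDiv`.
For part (ii), the lift `μ^T` has density `g ∘ T` with respect to `R`, where `g = dπ/dR^X`;
hence `log (dμ^T/dR) = log g ∘ T` and `μ^T` pushes forward to `π`, so both entropies are the same
integral, read on either side of `T`. The infima then agree: projecting shows `≥`, lifting
every `π ≪ R^X` shows `≤` (for the other `π` the entropy is `⊤`).
-/

open InformationTheory

section RelEntropy

variable {α β : Type*} [MeasurableSpace α] [MeasurableSpace β]

lemma relEntropy_of_not_absolutelyContinuous {P Q : Measure α} (h : ¬ P ≪ Q) :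
    relEntropy P Q = ⊤ :=
  if_neg fun hPQ => h hPQ.1

lemma relEntropy_eq_klDiv (P Q : Measure α) [IsFiniteMeasure P] [IsFiniteMeasure Q]
    (h : P Set.univ = Q Set.univ) : relEntropy P Q = klDiv P Q := by
  by_cases hPQ : P ≪ Q ∧ Integrable (llr P Q) P
  · rw [relEntropy, if_pos hPQ, ← toReal_klDiv_of_measure_eq hPQ.1 h,
      EReal.coe_ennreal_toReal (klDiv_ne_top hPQ.1 hPQ.2)]
  · rw [relEntropy, if_neg hPQ, klDiv_eq_top_iff.mpr fun h₁ h₂ => hPQ ⟨h₁, h₂⟩,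
      EReal.coe_ennreal_top]

theorem relEntropy_map_le (P Q : Measure α) [IsFiniteMeasure P] [IsFiniteMeasure Q]
    (h : P Set.univ = Q Set.univ) {T : α → β} (hT : Measurable T) :
    relEntropy (P.map T) (Q.map T) ≤ relEntropy P Q := by
  have h_map : P.map T Set.univ = Q.map T Set.univ := by
    simpa [Measure.map_apply hT MeasurableSet.univ] using h
  rw [relEntropy_eq_klDiv _ _ h_map, relEntropy_eq_klDiv _ _ h]
  exact EReal.coe_ennreal_le_coe_ennreal_iff.mpr (klDiv_map_le P Q hT)

end RelEntropy

section Lift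

variable {α β : Type*} [MeasurableSpace α] [MeasurableSpace β]
  (R : Measure α) [IsFiniteMeasure R] {T : α → β} (hT : Measurable T) (p : Measure β)

include hT in
lemma map_withDensity_rnDeriv_comp [SigmaFinite p] (hp : p ≪ R.map T) :
    (R.withDensity (fun x => p.rnDeriv (R.map T) (T x))).map T = p := by
  ext s hs
  rw [Measure.map_apply hT hs, withDensity_apply _ (hT hs),
    ← setLIntegral_map hs (Measure.measurable_rnDeriv _ _) hT, Measure.setLIntegral_rnDeriv' hp hs]

include hT in
lemma isProbabilityMeasure_withDensity_rnDeriv_comp [IsProbabilityMeasure p]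
    (hp : p ≪ R.map T) :
    IsProbabilityMeasure (R.withDensity (fun x => p.rnDeriv (R.map T) (T x))) := by
  constructor
  simpa [Measure.map_apply hT MeasurableSet.univ] using
    congrArg (· Set.univ) (map_withDensity_rnDeriv_comp R hT p hp)

include hT in
lemma llr_withDensity_rnDeriv_comp :
    llr (R.withDensity (fun x => p.rnDeriv (R.map T) (T x))) R
      =ᵐ[R] fun x => llr p (R.map T) (T x) := by
  have h_rn : (R.withDensity (fun x => p.rnDeriv (R.map T) (T x))).rnDeriv R
      =ᵐ[R] fun x => p.rnDeriv (R.map T) (T x) :=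
    Measure.rnDeriv_withDensity R ((Measure.measurable_rnDeriv _ _).comp hT)
  filter_upwards [h_rn] with x hx
  rw [llr, hx, llr]

include hT in
theorem relEntropy_withDensity_rnDeriv_comp [SigmaFinite p] (hp : p ≪ R.map T) :
    relEntropy (R.withDensity (fun x => p.rnDeriv (R.map T) (T x))) R
      = relEntropy p (R.map T) := by
  set m := R.withDensity (fun x => p.rnDeriv (R.map T) (T x))
  have hmR : m ≪ R := withDensity_absolutelyContinuous _ _
  have h_llr : llr m R =ᵐ[m] fun x => llr p (R.map T) (T x) :=
    hmR.ae_le (llr_withDensity_rnDeriv_comp R hT p)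
  have h_map : m.map T = p := map_withDensity_rnDeriv_comp R hT p hp
  have hf : AEStronglyMeasurable (llr p (R.map T)) (m.map T) :=
    (measurable_llr _ _).aestronglyMeasurable
  have h_int : Integrable (llr m R) m ↔ Integrable (llr p (R.map T)) p := by
    rw [integrable_congr h_llr]
    exact (integrable_map_measure hf hT.aemeasurable).symm.trans (by rw [h_map])
  have h_integral : ∫ x, llr m R x ∂m = ∫ y, llr p (R.map T) y ∂p := by
    rw [integral_congr_ae h_llr, ← integral_map hT.aemeasurable hf, h_map]
  rw [relEntropy, relEntropy, h_integral]
  classical exact if_congr (and_congr (iff_of_true hmR hp) h_int) rfl rfl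

end Lift

section Couplings

variable {α : Type*} [MeasurableSpace α] {μ ν : Measure α}

lemma map_mem_couplings_of_mem_PiX {q : Measure ((α × α) × (α × α))} (hq : q ∈ PiX μ ν) :
    q.map (fun z => (z.1.1, z.2.1)) ∈ couplings μ ν := by
  obtain ⟨hq_prob, hq_fst, hq_snd⟩ := hq
  refine ⟨Measure.isProbabilityMeasure_map (by fun_prop), ?_, ?_⟩
  · rwa [Measure.map_map measurable_fst (by fun_prop)]
  · rwa [Measure.map_map measurable_snd (by fun_prop)]

lemma withDensity_rnDeriv_mem_PiX (R : Measure ((α × α) × (α × α))) [IsFiniteMeasure R]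
    {p : Measure (α × α)} (hp : p ∈ couplings μ ν) (hac : p ≪ R.map (fun z => (z.1.1, z.2.1))) :
    R.withDensity (fun z => p.rnDeriv (R.map (fun z => (z.1.1, z.2.1))) (z.1.1, z.2.1))
      ∈ PiX μ ν := by
  obtain ⟨hp_prob, hp_fst, hp_snd⟩ := hp
  have hT : Measurable fun z : (α × α) × (α × α) => (z.1.1, z.2.1) := by fun_prop
  have h_map := map_withDensity_rnDeriv_comp R hT p hac
  refine ⟨isProbabilityMeasure_withDensity_rnDeriv_comp R hT p hac, ?_, ?_⟩
  · have h_fst := congrArg (Measure.map Prod.fst) h_map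
    rw [Measure.map_map measurable_fst hT, hp_fst] at h_fst
    exact h_fst
  · have h_snd := congrArg (Measure.map Prod.snd) h_map
    rw [Measure.map_map measurable_snd hT, hp_snd] at h_snd
    exact h_snd

theorem iInf_relEntropy_PiX_eq (R : Measure ((α × α) × (α × α))) [IsProbabilityMeasure R] :
    (⨅ q ∈ PiX μ ν, relEntropy q R)
      = ⨅ p ∈ couplings μ ν, relEntropy p (R.map (fun z => (z.1.1, z.2.1))) := by
  have hT : Measurable fun z : (α × α) × (α × α) => (z.1.1, z.2.1) := by fun_prop
  apply le_antisymm
  · refine le_iInf₂ fun p hp => ?_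
    by_cases hac : p ≪ R.map (fun z => (z.1.1, z.2.1))
    · have := hp.1
      exact (iInf₂_le _ (withDensity_rnDeriv_mem_PiX R hp hac)).trans_eq
        (relEntropy_withDensity_rnDeriv_comp R hT p hac)
    · rw [relEntropy_of_not_absolutelyContinuous hac]
      exact le_top
  · refine le_iInf₂ fun q hq => ?_
    have := hq.1
    exact (iInf₂_le _ (map_mem_couplings_of_mem_PiX hq)).trans (relEntropy_map_le q R (by simp) hT)

end Couplings

theorem kinetic_schrodinger_reduction_general
    (d : ℕ)
    (R : Measure ((EuclideanSpace ℝ (Fin d) × EuclideanSpace ℝ (Fin d)) ×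
      (EuclideanSpace ℝ (Fin d) × EuclideanSpace ℝ (Fin d))))
    [IsProbabilityMeasure R]
    (μ ν : Measure (EuclideanSpace ℝ (Fin d))) :
    (∀ q ∈ PiX μ ν,
      relEntropy (q.map (fun z => (z.1.1, z.2.1))) (R.map (fun z => (z.1.1, z.2.1)))
        ≤ relEntropy q R) ∧
    (∀ p ∈ couplings μ ν, p ≪ R.map (fun z => (z.1.1, z.2.1)) →
      IsProbabilityMeasure
        (R.withDensity (fun z => p.rnDeriv (R.map (fun z => (z.1.1, z.2.1))) (z.1.1, z.2.1))) ∧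
      R.withDensity (fun z => p.rnDeriv (R.map (fun z => (z.1.1, z.2.1))) (z.1.1, z.2.1))
        ∈ PiX μ ν ∧
      (R.withDensity (fun z => p.rnDeriv (R.map (fun z => (z.1.1, z.2.1))) (z.1.1, z.2.1))).map
          (fun z => (z.1.1, z.2.1)) = p ∧
      relEntropy
        (R.withDensity (fun z => p.rnDeriv (R.map (fun z => (z.1.1, z.2.1))) (z.1.1, z.2.1))) R
        = relEntropy p (R.map (fun z => (z.1.1, z.2.1)))) ∧
    (⨅ q ∈ PiX μ ν, relEntropy q R)
      = ⨅ p ∈ couplings μ ν, relEntropy p (R.map (fun z => (z.1.1, z.2.1))) := by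
  have hT : Measurable fun z : (EuclideanSpace ℝ (Fin d) × EuclideanSpace ℝ (Fin d)) ×
      (EuclideanSpace ℝ (Fin d) × EuclideanSpace ℝ (Fin d)) => (z.1.1, z.2.1) := by fun_prop
  refine ⟨fun q hq => ?_, fun p hp hac => ?_, iInf_relEntropy_PiX_eq R⟩
  · have := hq.1
    exact relEntropy_map_le q R (by simp) hT
  · have := hp.1
    exact ⟨isProbabilityMeasure_withDensity_rnDeriv_comp R hT p hac,
      withDensity_rnDeriv_mem_PiX R hp hac, map_withDensity_rnDeriv_comp R hT p hac,
      relEntropy_withDensity_rnDeriv_comp R hT p hac⟩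

/-- reduction of the kinetic Schrödinger problem to a static entropy
minimization over spatial couplings. -/
theorem kinetic_schrodinger_reduction
    (d : ℕ) (hd : 1 ≤ d)
    (R : Measure ((EuclideanSpace ℝ (Fin d) × EuclideanSpace ℝ (Fin d)) ×
      (EuclideanSpace ℝ (Fin d) × EuclideanSpace ℝ (Fin d))))
    [IsProbabilityMeasure R]
    (μ ν : Measure (EuclideanSpace ℝ (Fin d)))
    [IsProbabilityMeasure μ] [IsProbabilityMeasure ν] :
    (∀ q ∈ PiX μ ν,
      relEntropy (q.map (fun z => (z.1.1, z.2.1))) (R.map (fun z => (z.1.1, z.2.1)))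
        ≤ relEntropy q R) ∧
    (∀ p ∈ couplings μ ν, p ≪ R.map (fun z => (z.1.1, z.2.1)) →
      IsProbabilityMeasure
        (R.withDensity (fun z => p.rnDeriv (R.map (fun z => (z.1.1, z.2.1))) (z.1.1, z.2.1))) ∧
      R.withDensity (fun z => p.rnDeriv (R.map (fun z => (z.1.1, z.2.1))) (z.1.1, z.2.1))
        ∈ PiX μ ν ∧
      (R.withDensity (fun z => p.rnDeriv (R.map (fun z => (z.1.1, z.2.1))) (z.1.1, z.2.1))).map
          (fun z => (z.1.1, z.2.1)) = p ∧
      relEntropy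
        (R.withDensity (fun z => p.rnDeriv (R.map (fun z => (z.1.1, z.2.1))) (z.1.1, z.2.1))) R
        = relEntropy p (R.map (fun z => (z.1.1, z.2.1)))) ∧
    (⨅ q ∈ PiX μ ν, relEntropy q R)
      = ⨅ p ∈ couplings μ ν, relEntropy p (R.map (fun z => (z.1.1, z.2.1))) :=
  kinetic_schrodinger_reduction_general d R μ ν
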